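/- arXiv:math/0510540 — 5 statements merged into one kernel-verified Lean document; each statement's English description precedes it below -/
import Mathlib

section
/- Let G be a finite group and p a prime. Every p-centric subgroup of G is distinguished: if P is a nontrivial p-subgroup such that Z(P) is a Sylow p-subgroup of C_G(P), then Z(P) contains a nontrivial element that lies in the center of some Sylow p-subgroup of G. -/
/-- The center of a subgroup `P`, viewed as a subgroup of the ambient group `G`. -/
def ZS {G : Type*} [Group G] (P : Subgroup G) : Subgroup G :=
  Subgroup.centralizer (P : Set G) ⊓ P

/-- Every `p`-centric subgroup is distinguished: if `Z(P)` is a Sylow `p`-subgroup of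
`C_G(P)` (i.e. a maximal `p`-subgroup of the centralizer), then `Z(P)` contains a
nontrivial element lying in the center of some Sylow `p`-subgroup of `G`. -/
theorem stmt1 {G : Type*} [Group G] [Fintype G] {p : ℕ} [Fact p.Prime]
    (P : Subgroup G) (hp : IsPGroup p ↥P) (hne : P ≠ ⊥)
    (hcen : ∀ Q : Subgroup G, IsPGroup p ↥Q → Q ≤ Subgroup.centralizer (P : Set G) →
      ZS P ≤ Q → Q = ZS P) :
    ∃ x ∈ ZS P, x ≠ 1 ∧ ∃ S : Sylow p G, x ∈ ZS (S : Subgroup G) := by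
  obtain ⟨S, hPS⟩ := hp.exists_le_sylow
  -- Z(S) as a subgroup of G
  set ZC : Subgroup G := (Subgroup.center ↥(S : Subgroup G)).map (S : Subgroup G).subtype with hZC
  have hZCS : ZC ≤ ZS (S : Subgroup G) := by
    rintro x ⟨y, hy, rfl⟩
    refine ⟨fun g hg => ?_, y.2⟩
    have := (Subgroup.mem_center_iff.mp hy) ⟨g, hg⟩
    simpa [Subtype.ext_iff] using this
  have hZCcent : ZC ≤ Subgroup.centralizer (P : Set G) := by
    refine le_trans (le_trans hZCS inf_le_left) (Subgroup.centralizer_le ?_)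
    exact_mod_cast hPS
  have hZCleS : ZC ≤ (S : Subgroup G) := le_trans hZCS inf_le_right
  have hZSPle : ZS P ≤ (S : Subgroup G) := le_trans inf_le_right hPS
  -- Q = ZC ⊔ ZS P is a p-group contained in the centralizer of P
  have hQp : IsPGroup p ↥(ZC ⊔ ZS P) :=
    IsPGroup.to_le S.isPGroup' (sup_le hZCleS hZSPle)
  have hQcent : ZC ⊔ ZS P ≤ Subgroup.centralizer (P : Set G) :=
    sup_le hZCcent inf_le_left
  have hQ := hcen _ hQp hQcent le_sup_right
  have hZCle : ZC ≤ ZS P := le_sup_left.trans hQ.le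
  -- nontrivial center of S
  have hSne : Nontrivial ↥(S : Subgroup G) := by
    obtain ⟨a, ha, ha1⟩ := (Subgroup.nontrivial_iff_exists_ne_one P).mp
      ((Subgroup.nontrivial_iff_ne_bot P).mpr hne)
    exact ⟨⟨a, hPS ha⟩, 1, fun h => ha1 (by simpa [Subtype.ext_iff] using h)⟩
  have := S.isPGroup'.center_nontrivial
  obtain ⟨y, hy⟩ := exists_ne (1 : Subgroup.center ↥(S : Subgroup G))
  have hyZC : ((y : ↥(S : Subgroup G)) : G) ∈ ZC := ⟨y, y.2, rfl⟩
  refine ⟨_, hZCle hyZC, ?_, S, hZCS hyZC⟩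
  intro h
  apply hy
  ext
  exact h
end

section
/- Let G be a finite group of local characteristic p-type and R a nontrivial p-radical subgroup of G. Then for any Sylow p-subgroup S of G containing R, Z(S) ≤ Z(R); in particular R is distinguished. -/
/-- The largest normal `p`-subgroup `O_p(H)` of a subgroup `H ≤ G`, as the join of all
normal `p`-subgroups of `H`. -/
def pCore (p : ℕ) {G : Type*} [Group G] (H : Subgroup G) : Subgroup G :=
  ⨆ Q ∈ {Q : Subgroup G | Q ≤ H ∧ IsPGroup p ↥Q ∧ ∀ h ∈ H, ∀ x ∈ Q, h * x * h⁻¹ ∈ Q}, Q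

/-!
Since `R = O_p(N_G(R))`, local characteristic `p`-type says that `C_G(R)`, which lies in
`N_G(R)`, is contained in `R`. For `R ≤ S`, the center `Z(S)` centralizes `R`, hence lies in
`R` and so in `Z(R)`. As `S` is a nontrivial finite `p`-group, `Z(S) ≠ 1`, which makes `R`
distinguished.
-/

section

open Subgroup

variable {G : Type*} [Group G]

lemma ZS_le_ZS_of_le_of_centralizer_le {R S : Subgroup G} (hRS : R ≤ S)
    (hC : centralizer (R : Set G) ≤ R) : ZS S ≤ ZS R :=
  have hZS : ZS S ≤ centralizer (R : Set G) := inf_le_left.trans (centralizer_le hRS)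
  le_inf hZS (hZS.trans hC)

lemma coe_mem_ZS_of_mem_center {P : Subgroup G} {z : P} (hz : z ∈ center P) : (z : G) ∈ ZS P :=
  ⟨fun g hg => congrArg Subtype.val (mem_center_iff.mp hz ⟨g, hg⟩), z.2⟩

lemma IsPGroup.exists_mem_ZS_ne_one {p : ℕ} [Fact p.Prime] {P : Subgroup G} [Finite P]
    (hP : IsPGroup p P) (hne : P ≠ ⊥) : ∃ z ∈ ZS P, z ≠ 1 := by
  have := (nontrivial_iff_ne_bot P).mpr hne
  have := hP.center_nontrivial
  obtain ⟨z, hz⟩ := exists_ne (1 : center P)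
  exact ⟨z, coe_mem_ZS_of_mem_center z.2, fun h => hz (Subtype.ext (Subtype.ext h))⟩

end

/-- If `G` is of local characteristic `p`-type and `R` is a nontrivial `p`-radical
subgroup, then for any Sylow `p`-subgroup `S` containing `R` we have `Z(S) ≤ Z(R)`;
in particular `R` is distinguished. -/
theorem stmt3 {G : Type*} [Group G] [Fintype G] {p : ℕ} [Fact p.Prime]
    (hChar : ∀ Q : Subgroup G, Q ≠ ⊥ → IsPGroup p ↥Q →
      Subgroup.centralizer ((pCore p (Subgroup.normalizer (Q : Set G)) : Subgroup G) : Set G) ⊓ Subgroup.normalizer (Q : Set G) ≤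
        pCore p (Subgroup.normalizer (Q : Set G)))
    (R : Subgroup G) (hR : IsPGroup p ↥R) (hne : R ≠ ⊥)
    (hrad : R = pCore p (Subgroup.normalizer (R : Set G)))
    (S : Sylow p G) (hRS : R ≤ (S : Subgroup G)) :
    ZS (S : Subgroup G) ≤ ZS R ∧
      ∃ x ∈ ZS R, x ≠ 1 ∧ ∃ T : Sylow p G, x ∈ ZS (T : Subgroup G) := by
  have hC : Subgroup.centralizer (R : Set G) ≤ R := by
    have h := hChar R hne hR
    rw [← hrad] at h
    exact (le_inf le_rfl (Subgroup.centralizer_le_normalizer _)).trans h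
  have hZ := ZS_le_ZS_of_le_of_centralizer_le hRS hC
  obtain ⟨z, hz, hz1⟩ := S.isPGroup'.exists_mem_ZS_ne_one (ne_bot_of_le_ne_bot hne hRS)
  exact ⟨hZ, z, hZ hz, hz1, S, hz⟩
end

section
/- Let G be a finite group, p a prime, P ≤ Q nontrivial p-subgroups with P normal in Q. If Z(P) contains a nontrivial element of E_1(G), then so does Z(Q). (Here E_1(G) is the closure of the set of central-type elements of order p under conjugation and products of commuting elements.) -/
/-- The smallest subset of `G` containing the elements of order `p` lying in the center of
some Sylow `p`-subgroup, closed under conjugation and under products of commuting elements. -/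
inductive E1mem (p : ℕ) {G : Type*} [Group G] : G → Prop
  | base (x : G) (h : orderOf x = p) (S : Sylow p G) (hx : x ∈ ZS (S : Subgroup G)) : E1mem p x
  | conj (g x : G) (h : E1mem p x) : E1mem p (g * x * g⁻¹)
  | mul (x y : G) (hx : E1mem p x) (hy : E1mem p y) (h : Commute x y) : E1mem p (x * y)

lemma E1mem.pow {p : ℕ} {G : Type*} [Group G] {x : G} (hx : E1mem p x) :
    ∀ n : ℕ, 1 ≤ n → E1mem p (x ^ n) := by
  intro n hn
  induction n with
  | zero => omega
  | succ m ih =>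
    rcases Nat.eq_zero_or_pos m with rfl | hm
    · simpa using hx
    · have := E1mem.mul (x ^ m) x (ih hm) hx ((Commute.self_pow x m).symm)
      simpa [pow_succ] using this

lemma E1mem.inv {p : ℕ} [Fact p.Prime] {G : Type*} [Group G] {x : G} (hx : E1mem p x) :
    E1mem p x⁻¹ := by
  induction hx with
  | base x h S hxS =>
    have hp : 2 ≤ p := (Fact.out : p.Prime).two_le
    have hx' : E1mem p x := E1mem.base x h S hxS
    have hpow := hx'.pow (p - 1) (by omega)
    have hxo : x ^ p = 1 := by rw [← h]; exact pow_orderOf_eq_one x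
    have hmul : x * x ^ (p - 1) = 1 := by
      rw [← pow_succ', show p - 1 + 1 = p by omega, hxo]
    have : x⁻¹ = x ^ (p - 1) := inv_eq_of_mul_eq_one_right hmul
    rwa [this]
  | conj g x h ih =>
    have := E1mem.conj g x⁻¹ ih
    simpa [mul_assoc] using this
  | mul x y hx hy h ihx ihy =>
    have := E1mem.mul x⁻¹ y⁻¹ ihx ihy (h.inv_inv)
    rw [mul_inv_rev, ← h.inv_inv.eq]
    exact this

/-- If `P ⊴ Q` are nontrivial `p`-subgroups and `Z(P)` contains a nontrivial element of
`E₁(G)`, then so does `Z(Q)`. -/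
theorem stmt4 {G : Type*} [Group G] [Fintype G] {p : ℕ} [Fact p.Prime]
    (P Q : Subgroup G) (hP : IsPGroup p ↥P) (hQ : IsPGroup p ↥Q)
    (hPne : P ≠ ⊥) (hQne : Q ≠ ⊥) (hPQ : P ≤ Q)
    (hnorm : ∀ q ∈ Q, ∀ x ∈ P, q * x * q⁻¹ ∈ P)
    (hx : ∃ x ∈ ZS P, x ≠ 1 ∧ E1mem p x) :
    ∃ y ∈ ZS Q, y ≠ 1 ∧ E1mem p y := by
  classical
  obtain ⟨x, hxZ, hxne, hxE⟩ := hx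
  -- commuting inside Z(P)
  have hcomm : ∀ a b : G, a ∈ ZS P → b ∈ ZS P → Commute a b := by
    intro a b ha hb
    have ha1 : a ∈ Subgroup.centralizer (P : Set G) := ha.1
    have hb2 : b ∈ P := hb.2
    exact ((Subgroup.mem_centralizer_iff.mp ha1) b hb2).symm
  -- the subgroup B
  set B : Subgroup G :=
    { carrier := {a | a ∈ ZS P ∧ (a = 1 ∨ E1mem p a)}
      one_mem' := ⟨(ZS P).one_mem, Or.inl rfl⟩
      mul_mem' := by
        rintro a b ⟨haZ, ha⟩ ⟨hbZ, hb⟩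
        refine ⟨(ZS P).mul_mem haZ hbZ, ?_⟩
        rcases ha with rfl | ha
        · simpa using hb
        rcases hb with rfl | hb
        · simpa using Or.inr ha
        · exact Or.inr (E1mem.mul a b ha hb (hcomm a b haZ hbZ))
      inv_mem' := by
        rintro a ⟨haZ, ha⟩
        refine ⟨(ZS P).inv_mem haZ, ?_⟩
        rcases ha with rfl | ha
        · simp
        · exact Or.inr ha.inv } with hBdef
  have hBmem : ∀ a : G, a ∈ B ↔ a ∈ ZS P ∧ (a = 1 ∨ E1mem p a) := fun a => Iff.rfl
  have hBP : B ≤ P := fun a ha => ((hBmem a).mp ha).1.2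
  have hxB : x ∈ B := (hBmem x).mpr ⟨hxZ, Or.inr hxE⟩
  -- Q normalizes B
  have hQnormB : ∀ q ∈ Q, ∀ a ∈ B, q * a * q⁻¹ ∈ B := by
    intro q hq a ha
    obtain ⟨⟨haC, haP⟩, haE⟩ := (hBmem a).mp ha
    refine (hBmem _).mpr ⟨⟨?_, hnorm q hq a haP⟩, ?_⟩
    · show q * a * q⁻¹ ∈ Subgroup.centralizer (P : Set G)
      rw [Subgroup.mem_centralizer_iff]
      intro g hg
      have hg' : q⁻¹ * g * q ∈ P := by
        have := hnorm q⁻¹ (Q.inv_mem hq) g hg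
        simpa using this
      have haC' : a ∈ Subgroup.centralizer (P : Set G) := haC
      have := (Subgroup.mem_centralizer_iff.mp haC') _ hg'
      -- (q⁻¹ g q) a = a (q⁻¹ g q)  →  g (q a q⁻¹) = (q a q⁻¹) g
      have h2 : g * (q * a * q⁻¹) = q * ((q⁻¹ * g * q) * a) * q⁻¹ := by group
      rw [h2, this]; group
    · rcases haE with rfl | haE
      · left; simp
      · exact Or.inr (E1mem.conj q a haE)
  -- conjugation action of Q on B
  letI : MulAction ↥Q ↥B :=
    { smul := fun q b => ⟨(q : G) * (b : G) * (q : G)⁻¹, hQnormB q q.2 b b.2⟩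
      one_smul := fun b => by ext; simp [HSMul.hSMul]
      mul_smul := fun q r b => by ext; simp [HSMul.hSMul]; group }
  have hsmul : ∀ (q : ↥Q) (b : ↥B), ((q • b : ↥B) : G) = (q : G) * (b : G) * (q : G)⁻¹ :=
    fun q b => rfl
  have hBp : IsPGroup p ↥B := hP.to_le hBP
  -- p divides the cardinality of B since B is a nontrivial p-group
  haveI : Nontrivial ↥B := ⟨⟨⟨x, hxB⟩, 1, by simp [Subtype.ext_iff, hxne]⟩⟩
  have hdvd : p ∣ Nat.card ↥B := by
    obtain ⟨n, hn⟩ := IsPGroup.iff_card.mp hBp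
    have hlt : 1 < Nat.card ↥B := Finite.one_lt_card
    have hn0 : n ≠ 0 := by rintro rfl; rw [hn] at hlt; simp at hlt
    rw [hn]
    exact dvd_pow_self p hn0
  -- 1 is a fixed point of the action
  have h1fix : (1 : ↥B) ∈ MulAction.fixedPoints ↥Q ↥B := by
    intro q
    ext
    rw [hsmul]
    simp
  obtain ⟨b, hbfix, hbne⟩ := hQ.exists_fixed_point_of_prime_dvd_card_of_fixed_point ↥B hdvd h1fix
  refine ⟨(b : G), ⟨?_, hPQ (hBP b.2)⟩, ?_, ?_⟩
  · show (b : G) ∈ Subgroup.centralizer (Q : Set G)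
    rw [Subgroup.mem_centralizer_iff]
    intro g hg
    have := hbfix ⟨g, hg⟩
    have h2 : g * (b : G) * g⁻¹ = (b : G) := by
      have := congrArg (Subtype.val) this
      rwa [hsmul] at this
    calc g * (b : G) = (g * (b : G) * g⁻¹) * g := by group
      _ = (b : G) * g := by rw [h2]
  · intro h
    exact hbne (by ext; simp [← h])
  · have := ((hBmem (b : G)).mp b.2).2
    rcases this with h1 | hE
    · exact absurd (by ext; simp [h1]) (Ne.symm hbne)
    · exact hE
end

section
/- Let G be a finite group, p a prime, P a nontrivial p-subgroup, and Q a p-subgroup with P < Q. If Z(Q) contains a nontrivial element of central type (order p, central in some Sylow p-subgroup of G), then so does Z(N_Q(P)). In particular P < N_Q(P) and N_Q(P) is distinguished. -/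
/-! Finite `p`-groups are nilpotent, so by the normalizer condition the proper subgroup `P` of `Q`
is properly contained in `N_Q(P)`. An element of `Z(Q)` centralizes `P ≤ Q`, hence lies in
`N_Q(P)` and then in its center, so the central-type witness for `Q` also serves for `N_Q(P)`. -/

theorem Subgroup.lt_inf_normalizer_of_lt {G : Type*} [Group G] {H K : Subgroup G}
    [Group.IsNilpotent K] (hHK : H < K) : H < K ⊓ normalizer (H : Set G) := by
  have hproper : H.subgroupOf K < ⊤ :=
    lt_top_iff_ne_top.mpr fun h ↦ hHK.not_ge (subgroupOf_eq_top.mp h)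
  have hlt : H.subgroupOf K < (normalizer (H : Set G)).subgroupOf K := by
    rw [subgroupOf_normalizer_eq hHK.le]
    exact Group.normalizerCondition_of_isNilpotent _ hproper
  have := map_subtype_lt_map_subtype.mpr hlt
  rwa [map_subgroupOf_eq_of_le hHK.le, subgroupOf_map_subtype, inf_comm] at this

theorem mem_ZS_of_le {G : Type*} [Group G] {H K : Subgroup G} (hHK : H ≤ K) {x : G}
    (hx : x ∈ ZS K) (hxH : x ∈ H) : x ∈ ZS H :=
  ⟨Subgroup.centralizer_le hHK hx.1, hxH⟩

theorem mem_normalizer_of_mem_ZS {G : Type*} [Group G] {H K : Subgroup G} (hHK : H ≤ K)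
    {x : G} (hx : x ∈ ZS K) : x ∈ Subgroup.normalizer (H : Set G) :=
  Subgroup.centralizer_le_normalizer _ (Subgroup.centralizer_le hHK hx.1)

theorem stmt6_general {G : Type*} [Group G] [Fintype G] {p : ℕ} [Fact p.Prime]
    (P Q : Subgroup G) (hQ : IsPGroup p ↥Q)
    (hlt : P < Q)
    (hx : ∃ x ∈ ZS Q, x ≠ 1 ∧ orderOf x = p ∧
      ∃ S : Sylow p G, x ∈ ZS (S : Subgroup G)) :
    P < Q ⊓ Subgroup.normalizer (P : Set G) ∧
      ∃ y ∈ ZS (Q ⊓ Subgroup.normalizer (P : Set G)), y ≠ 1 ∧ orderOf y = p ∧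
        ∃ S : Sylow p G, y ∈ ZS (S : Subgroup G) := by
  have : Group.IsNilpotent Q := hQ.isNilpotent
  obtain ⟨x, hxZ, hx1, hxp, hxS⟩ := hx
  have hxN : x ∈ Q ⊓ Subgroup.normalizer (P : Set G) :=
    ⟨hxZ.2, mem_normalizer_of_mem_ZS hlt.le hxZ⟩
  exact ⟨P.lt_inf_normalizer_of_lt hlt, x, mem_ZS_of_le inf_le_left hxZ hxN, hx1, hxp, hxS⟩

/-- If `P < Q` are `p`-subgroups with `P` nontrivial and `Z(Q)` contains a nontrivial
element of central type, then `P < N_Q(P)` and `Z(N_Q(P))` contains a nontrivial element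
of central type, i.e. `N_Q(P)` is distinguished. -/
theorem stmt6 {G : Type*} [Group G] [Fintype G] {p : ℕ} [Fact p.Prime]
    (P Q : Subgroup G) (hP : IsPGroup p ↥P) (hQ : IsPGroup p ↥Q)
    (hPne : P ≠ ⊥) (hlt : P < Q)
    (hx : ∃ x ∈ ZS Q, x ≠ 1 ∧ orderOf x = p ∧
      ∃ S : Sylow p G, x ∈ ZS (S : Subgroup G)) :
    P < Q ⊓ Subgroup.normalizer (P : Set G) ∧
      ∃ y ∈ ZS (Q ⊓ Subgroup.normalizer (P : Set G)), y ≠ 1 ∧ orderOf y = p ∧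
        ∃ S : Sylow p G, y ∈ ZS (S : Subgroup G) :=
  stmt6_general P Q hQ hlt hx
end

section
/- Let G be a finite group, p a prime, and P a nontrivial p-subgroup of G that is not p-radical, i.e. P < O_p(N_G(P)). If Q > P is a p-subgroup of G, then N_Q(P)·O_p(N_G(P)) is a p-subgroup of N_G(P) containing both N_Q(P) and O_p(N_G(P)), and N_Q(P) > P. -/
lemma pCore_mem (p : ℕ) {G : Type*} [Group G] [Fintype G] [Fact p.Prime] (H : Subgroup G) :
    pCore p H ∈ {Q : Subgroup G | Q ≤ H ∧ IsPGroup p ↥Q ∧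
      ∀ h ∈ H, ∀ x ∈ Q, h * x * h⁻¹ ∈ Q} := by
  set S : Set (Subgroup G) :=
    {Q : Subgroup G | Q ≤ H ∧ IsPGroup p ↥Q ∧ ∀ h ∈ H, ∀ x ∈ Q, h * x * h⁻¹ ∈ Q} with hS
  have hbot : (⊥ : Subgroup G) ∈ S := by
    refine ⟨bot_le, IsPGroup.of_bot, ?_⟩
    intro h hh x hx
    simp only [Subgroup.mem_bot] at hx ⊢
    simp [hx]
  have hsup : ∀ A ∈ S, ∀ B ∈ S, A ⊔ B ∈ S := by
    intro A hA B hB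
    have hAnorm : A ≤ Subgroup.normalizer (B : Set G) := by
      intro a ha
      rw [Subgroup.mem_normalizer_iff]
      intro x
      constructor
      · intro hx; exact hB.2.2 a (hA.1 ha) x hx
      · intro hx
        have := hB.2.2 a⁻¹ (inv_mem (hA.1 ha)) _ hx
        simpa [mul_assoc] using this
    refine ⟨sup_le hA.1 hB.1, IsPGroup.to_sup_of_normal_right' hA.2.1 hB.2.1 hAnorm, ?_⟩
    intro h hh x hx
    have hmap : ∀ K ∈ S, Subgroup.map (MulAut.conj h).toMonoidHom K ≤ K := by
      intro K hK y hy
      obtain ⟨z, hz, rfl⟩ := hy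
      exact hK.2.2 h hh z hz
    have : Subgroup.map (MulAut.conj h).toMonoidHom (A ⊔ B) ≤ A ⊔ B := by
      rw [Subgroup.map_sup]
      exact sup_le ((hmap A hA).trans le_sup_left) ((hmap B hB).trans le_sup_right)
    exact this ⟨x, hx, rfl⟩
  have hfin : S.Finite := Set.toFinite S
  have key : pCore p H ∈ S := by
    have h1 : pCore p H = sSup S := by rw [pCore, sSup_eq_iSup]
    have h2 : sSup S = hfin.toFinset.sup id := by
      rw [Finset.sup_id_eq_sSup, Set.Finite.coe_toFinset]
    rw [h1, h2]
    refine Finset.sup_induction hbot (fun a ha b hb => hsup a ha b hb) ?_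
    intro b hb
    simpa using (Set.Finite.mem_toFinset hfin).mp hb
  exact key

/-- Group-theoretic core of the contractibility argument: if `P` is a non-`p`-radical
`p`-subgroup (so `P < O_p(N_G(P))`) and `Q > P` is a `p`-subgroup, then
`N_Q(P)·O_p(N_G(P))` is a `p`-subgroup of `N_G(P)` containing both `N_Q(P)` and
`O_p(N_G(P))`, and `N_Q(P) > P`. -/
theorem stmt9 {G : Type*} [Group G] [Fintype G] {p : ℕ} [Fact p.Prime]
    (P Q : Subgroup G) (hP : IsPGroup p ↥P) (hQ : IsPGroup p ↥Q)
    (hPne : P ≠ ⊥) (hnotrad : P < pCore p (Subgroup.normalizer (P : Set G))) (hlt : P < Q) :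
    IsPGroup p ↥((Q ⊓ Subgroup.normalizer (P : Set G)) ⊔ pCore p (Subgroup.normalizer (P : Set G))) ∧
      (Q ⊓ Subgroup.normalizer (P : Set G)) ⊔ pCore p (Subgroup.normalizer (P : Set G)) ≤ Subgroup.normalizer (P : Set G) ∧
      Q ⊓ Subgroup.normalizer (P : Set G) ≤ (Q ⊓ Subgroup.normalizer (P : Set G)) ⊔ pCore p (Subgroup.normalizer (P : Set G)) ∧
      pCore p (Subgroup.normalizer (P : Set G)) ≤ (Q ⊓ Subgroup.normalizer (P : Set G)) ⊔ pCore p (Subgroup.normalizer (P : Set G)) ∧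
      P < Q ⊓ Subgroup.normalizer (P : Set G) := by
  obtain ⟨hcle, hcp, hcnorm⟩ := pCore_mem p (Subgroup.normalizer (P : Set G))
  have hinfp : IsPGroup p ↥(Q ⊓ Subgroup.normalizer (P : Set G)) :=
    hQ.to_inf_left
  have hnorm' : Q ⊓ Subgroup.normalizer (P : Set G) ≤ Subgroup.normalizer ((pCore p (Subgroup.normalizer (P : Set G)) : Subgroup G) : Set G) := by
    intro a ha
    have haN : a ∈ Subgroup.normalizer (P : Set G) := ha.2
    rw [Subgroup.mem_normalizer_iff]
    intro x
    constructor
    · intro hx; exact hcnorm a haN x hx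
    · intro hx
      have := hcnorm a⁻¹ (inv_mem haN) _ hx
      simpa [mul_assoc] using this
  refine ⟨IsPGroup.to_sup_of_normal_right' hinfp hcp hnorm',
    sup_le inf_le_right hcle, le_sup_left, le_sup_right, ?_⟩
  -- normalizers grow in p-groups
  have hPle : P ≤ Q ⊓ Subgroup.normalizer (P : Set G) := le_inf hlt.le Subgroup.le_normalizer
  have hnc : NormalizerCondition ↥Q := by
    haveI : Group.IsNilpotent ↥Q := hQ.isNilpotent
    exact normalizerCondition_of_isNilpotent
  have hsubtop : P.subgroupOf Q < ⊤ := by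
    rw [lt_top_iff_ne_top]
    intro h
    rw [Subgroup.subgroupOf_eq_top] at h
    exact absurd (le_antisymm hlt.le h) hlt.ne
  obtain ⟨x, hxn, hxP⟩ := SetLike.exists_of_lt (hnc _ hsubtop)
  have hxP' : (x : G) ∉ P := by
    intro h; exact hxP (Subgroup.mem_subgroupOf.mpr h)
  have hxN : (x : G) ∈ Subgroup.normalizer (P : Set G) := by
    rw [Subgroup.mem_normalizer_iff]
    intro g
    by_cases hg : g ∈ Q
    · have := (Subgroup.mem_normalizer_iff.mp hxn) ⟨g, hg⟩
      simp only [Subgroup.mem_subgroupOf] at this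
      exact this
    · constructor
      · intro hgP; exact absurd (hlt.le hgP) hg
      · intro hconj
        exfalso
        have : (x : G) * g * (x : G)⁻¹ ∈ Q := hlt.le hconj
        have hg' : g ∈ Q := by
          have := mul_mem (mul_mem (inv_mem x.2) this) x.2
          simpa [mul_assoc] using this
        exact hg hg'
  exact lt_of_le_of_ne hPle (fun h => hxP' (h ▸ Subgroup.mem_inf.mpr ⟨x.2, hxN⟩ : (x:G) ∈ P))
end
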